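/- For every nonnegative integer n, $\frac{1}{n+1}\sum_{l=0}^{n+1}\binom{n+1}{l}\Big((\tfrac12)_{n+1-l,\lambda}-(-\tfrac12)_{n+1-l,\lambda}\Big) B_{l,\lambda}^{(c)}(x,y) = \sum_{k=0}^n\sum_{m=0}^{\lfloor k/2\rfloor}\binom{n}{k}(x)_{n-k,\lambda}(-1)^m\lambda^{k-2m}y^{2m}S_1(k,2m)$. -/

import Mathlib

open PowerSeries Finset Complex

/-- The degenerate falling factorial `(x)_{n,λ} = x(x-λ)⋯(x-(n-1)λ)`. -/
noncomputable def dff (l x : ℂ) (n : ℕ) : ℂ := ∏ j ∈ Finset.range n, (x - j * l)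

/-- Exponential generating function of a sequence: `Σ f n * t^n / n!`. -/
noncomputable def egf (f : ℕ → ℂ) : PowerSeries ℂ := PowerSeries.mk fun n => f n / n.factorial

/-- The degenerate exponential `e_λ^x(t) = (1+λt)^{x/λ} = Σ (x)_{n,λ} t^n/n!` as a power series. -/
noncomputable def degExp (l x : ℂ) : PowerSeries ℂ := egf (dff l x)

/-- The degenerate cosine `cos_λ^{(y)}(t) = cos((y/λ) log(1+λt)) = (e_λ^{iy}(t)+e_λ^{-iy}(t))/2`. -/
noncomputable def degCos (l y : ℂ) : PowerSeries ℂ :=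
  (PowerSeries.C : ℂ →+* PowerSeries ℂ) (1/2) * (degExp l (Complex.I * y) + degExp l (-(Complex.I * y)))

/-- The degenerate sine `sin_λ^{(y)}(t) = sin((y/λ) log(1+λt)) = (e_λ^{iy}(t)-e_λ^{-iy}(t))/(2i)`. -/
noncomputable def degSin (l y : ℂ) : PowerSeries ℂ :=
  (PowerSeries.C : ℂ →+* PowerSeries ℂ) (1/(2*Complex.I)) * (degExp l (Complex.I * y) - degExp l (-(Complex.I * y)))

/-- The exponential series `e^{at} = Σ a^n t^n/n!`. -/
noncomputable def expS (a : ℂ) : PowerSeries ℂ := egf (fun n => a ^ n)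

/-- The series of `log(1+t)`. -/
noncomputable def logS : PowerSeries ℂ := PowerSeries.mk fun n => if n = 0 then 0 else (-1)^(n+1) / n

/-!
Compare the coefficients of `t^(n+1)` in the defining identity of `B^{(c)}_{l,λ}`: both sides are
products of exponential generating functions, hence binomial convolutions, and the extra factor `t`
on the right shifts the index by one, which produces the factor `n + 1`. The coefficients of the
degenerate cosine come from the expansion `(z)_{k,λ} = ∑ⱼ S₁(k,j) z^j λ^(k-j)` at `z = ± i y`,
where the odd powers cancel. That expansion follows from the recurrence
`S₁(k+1,j+1) = S₁(k,j) - k S₁(k,j+1)`, read off from `(1 + t) (log (1 + t))' = 1`.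
-/

@[simp]
lemma coeff_egf (f : ℕ → ℂ) (n : ℕ) : coeff n (egf f) = f n / n.factorial := coeff_mk _ _

lemma egf_injective : Function.Injective egf := by
  intro f g h
  funext n
  have := congrArg (coeff n) h
  simpa [Nat.factorial_ne_zero] using this

lemma egf_sub (f g : ℕ → ℂ) : egf f - egf g = egf (f - g) := by
  ext n
  simp [sub_div]

lemma egf_mul (f g : ℕ → ℂ) :
    egf f * egf g = egf fun n => ∑ k ∈ range (n + 1), (n.choose k : ℂ) * f k * g (n - k) := by
  ext n
  rw [coeff_mul, Nat.sum_antidiagonal_eq_sum_range_succ_mk, coeff_egf, sum_div]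
  refine sum_congr rfl fun k hk => ?_
  have hkn : k ≤ n := Nat.lt_succ_iff.mp (mem_range.mp hk)
  rw [coeff_egf, coeff_egf, Nat.cast_choose ℂ hkn]
  have : (n.factorial : ℂ) ≠ 0 := Nat.cast_ne_zero.mpr n.factorial_ne_zero
  field_simp

lemma X_mul_egf (f : ℕ → ℂ) : X * egf f = egf fun n => n * f (n - 1) := by
  ext n
  cases n with
  | zero => simp
  | succ n =>
    rw [coeff_succ_X_mul, coeff_egf, coeff_egf, Nat.factorial_succ]
    push_cast
    field_simp

lemma coeff_derivative_logS (k : ℕ) : coeff k (d⁄dX ℂ logS) = (-1) ^ k := by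
  rw [coeff_derivative, logS, coeff_mk, if_neg k.succ_ne_zero]
  have : (k : ℂ) + 1 ≠ 0 := Nat.cast_add_one_ne_zero k
  push_cast
  field_simp
  ring

lemma one_add_X_mul_derivative_logS : (1 + X) * d⁄dX ℂ logS = 1 := by
  ext k
  rw [add_mul, one_mul, map_add]
  cases k with
  | zero => simp [coeff_derivative_logS, coeff_zero_eq_constantCoeff]
  | succ k => simp [coeff_succ_X_mul, coeff_derivative_logS, pow_succ]

lemma coeff_logS_pow_succ_recurrence (j k : ℕ) :
    ((k : ℂ) + 1) * coeff (k + 1) (logS ^ (j + 1)) + k * coeff k (logS ^ (j + 1)) =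
      ((j : ℂ) + 1) * coeff k (logS ^ j) := by
  have hode : (1 + X) * d⁄dX ℂ (logS ^ (j + 1)) = C ((j : ℂ) + 1) * logS ^ j := by
    rw [Derivation.leibniz_pow, Nat.add_sub_cancel, smul_eq_mul, nsmul_eq_mul, map_add,
      map_natCast, map_one]
    push_cast
    linear_combination ((j : ℂ⟦X⟧) + 1) * logS ^ j * one_add_X_mul_derivative_logS
  have h := congrArg (coeff k) hode
  rw [add_mul, one_mul, map_add, coeff_C_mul] at h
  cases k with
  | zero =>
    simp only [coeff_derivative, coeff_zero_X_mul] at h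
    push_cast at h ⊢
    linear_combination h
  | succ k =>
    simp only [coeff_derivative, coeff_succ_X_mul] at h
    push_cast at h ⊢
    linear_combination h

noncomputable def stirling1 (k j : ℕ) : ℂ := k.factorial * coeff k (logS ^ j) / j.factorial

lemma stirling1_zero_zero : stirling1 0 0 = 1 := by simp [stirling1]

lemma stirling1_succ_zero (k : ℕ) : stirling1 (k + 1) 0 = 0 := by simp [stirling1, coeff_one]

lemma stirling1_eq_zero_of_lt {k j : ℕ} (h : k < j) : stirling1 k j = 0 := by
  have hdvd : (X : ℂ⟦X⟧) ^ j ∣ logS ^ j :=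
    pow_dvd_pow_of_dvd (X_dvd_iff.mpr (by simp [logS])) j
  simp [stirling1, X_pow_dvd_iff.mp hdvd k h]

lemma stirling1_succ_succ (k j : ℕ) :
    stirling1 (k + 1) (j + 1) = stirling1 k j - k * stirling1 k (j + 1) := by
  have : (k.factorial : ℂ) ≠ 0 := Nat.cast_ne_zero.mpr k.factorial_ne_zero
  have : (j.factorial : ℂ) ≠ 0 := Nat.cast_ne_zero.mpr j.factorial_ne_zero
  have : (j : ℂ) + 1 ≠ 0 := Nat.cast_add_one_ne_zero j
  simp only [stirling1, Nat.factorial_succ]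
  push_cast
  field_simp
  linear_combination coeff_logS_pow_succ_recurrence j k

lemma natCast_mul_stirling1_zero (k : ℕ) : (k : ℂ) * stirling1 k 0 = 0 := by
  cases k with
  | zero => simp
  | succ k => rw [stirling1_succ_zero, mul_zero]

lemma eq_stirling1_of_logS_pow {S : ℕ → ℕ → ℂ}
    (hS : ∀ j, logS ^ j = C (j.factorial : ℂ) * egf fun k => S k j) : S = stirling1 := by
  funext k j
  have : (k.factorial : ℂ) ≠ 0 := Nat.cast_ne_zero.mpr k.factorial_ne_zero
  have : (j.factorial : ℂ) ≠ 0 := Nat.cast_ne_zero.mpr j.factorial_ne_zero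
  rw [stirling1, hS, coeff_C_mul, coeff_egf]
  field_simp

lemma dff_eq_sum_antidiagonal_stirling1 (l z : ℂ) (k : ℕ) :
    dff l z k = ∑ p ∈ antidiagonal k, l ^ p.1 * z ^ p.2 * stirling1 k p.2 := by
  induction k with
  | zero => simp [dff, stirling1_zero_zero]
  | succ k ih =>
    -- split `∑_{i+j=k+1} λ^i z^j S₁(k,j)` at either end
    have hshift : ∑ p ∈ antidiagonal k, l ^ p.1 * z ^ (p.2 + 1) * stirling1 k (p.2 + 1) =
        l * dff l z k - l ^ (k + 1) * stirling1 k 0 := by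
      let f : ℕ × ℕ → ℂ := fun p => l ^ p.1 * z ^ p.2 * stirling1 k p.2
      have h := (Nat.sum_antidiagonal_succ' (n := k) (f := f)).symm.trans
        (Nat.sum_antidiagonal_succ (n := k) (f := f))
      simp only [f, stirling1_eq_zero_of_lt k.lt_succ_self, mul_zero, zero_add, pow_zero,
        mul_one] at h
      rw [ih, mul_sum]
      simp only [← mul_assoc, ← pow_succ']
      linear_combination h
    rw [dff, prod_range_succ, ← dff, Nat.sum_antidiagonal_succ']
    simp only [stirling1_succ_zero, stirling1_succ_succ, mul_zero, zero_add]
    have hsplit : ∑ p ∈ antidiagonal k,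
        l ^ p.1 * z ^ (p.2 + 1) * (stirling1 k p.2 - k * stirling1 k (p.2 + 1)) =
        z * dff l z k -
          k * ∑ p ∈ antidiagonal k, l ^ p.1 * z ^ (p.2 + 1) * stirling1 k (p.2 + 1) := by
      rw [ih, mul_sum, mul_sum, ← sum_sub_distrib]
      exact sum_congr rfl fun p _ => by ring
    rw [hsplit, hshift]
    linear_combination -l ^ (k + 1) * natCast_mul_stirling1_zero k

lemma dff_eq_sum_stirling1 (l z : ℂ) (k : ℕ) :
    dff l z k = ∑ j ∈ range (k + 1), z ^ j * l ^ (k - j) * stirling1 k j := by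
  rw [dff_eq_sum_antidiagonal_stirling1, ← Nat.sum_antidiagonal_swap]
  simp only [Prod.fst_swap, Prod.snd_swap]
  rw [Nat.sum_antidiagonal_eq_sum_range_succ fun j i => l ^ i * z ^ j * stirling1 k j]
  exact sum_congr rfl fun j _ => by ring

lemma sum_range_one_add_neg_one_pow_mul {R : Type*} [CommRing R] (f : ℕ → R) (k : ℕ) :
    ∑ j ∈ range (k + 1), (1 + (-1) ^ j) * f j = 2 * ∑ m ∈ range (k / 2 + 1), f (2 * m) := by
  have hodd : ∀ j ∈ range (k + 1), (1 + (-1 : R) ^ j) * f j ≠ 0 → Even j := by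
    intro j _ h
    by_contra hj
    rw [(Nat.not_even_iff_odd.mp hj).neg_one_pow, add_neg_cancel, zero_mul] at h
    exact h rfl
  have heven : (range (k + 1)).filter Even =
      (range (k / 2 + 1)).map ⟨(2 * ·), mul_right_injective₀ two_ne_zero⟩ := by
    ext j
    simp only [mem_filter, mem_range, mem_map, Function.Embedding.coeFn_mk, Nat.even_iff]
    constructor
    · rintro ⟨hj, hev⟩
      exact ⟨j / 2, by omega, by omega⟩
    · rintro ⟨m, hm, rfl⟩
      omega
  rw [← sum_filter_of_ne hodd, heven, sum_map, mul_sum]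
  refine sum_congr rfl fun m _ => ?_
  simp only [Function.Embedding.coeFn_mk, pow_mul, neg_one_sq, one_pow]
  ring

lemma degCos_eq_egf (l y : ℂ) :
    degCos l y = egf fun k => ∑ m ∈ range (k / 2 + 1),
      (-1) ^ m * l ^ (k - 2 * m) * y ^ (2 * m) * stirling1 k (2 * m) := by
  ext k
  rw [degCos, coeff_C_mul, map_add, degExp, degExp, coeff_egf, coeff_egf, coeff_egf, ← add_div,
    dff_eq_sum_stirling1, dff_eq_sum_stirling1, ← sum_add_distrib]
  have hparity : ∀ j ∈ range (k + 1),
      (I * y) ^ j * l ^ (k - j) * stirling1 k j + (-(I * y)) ^ j * l ^ (k - j) * stirling1 k j =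
        (1 + (-1) ^ j) * ((I * y) ^ j * l ^ (k - j) * stirling1 k j) := by
    intro j _
    rw [neg_pow]
    ring
  rw [sum_congr rfl hparity, sum_range_one_add_neg_one_pow_mul, mul_sum, sum_div, sum_div, mul_sum]
  refine sum_congr rfl fun m _ => ?_
  rw [mul_pow, pow_mul I, I_sq]
  ring

theorem stmt6 (lam x y : ℝ) (Bc : ℕ → ℂ) (S1 : ℕ → ℕ → ℂ)
    (hBc : egf Bc * (degExp lam (1/2) - degExp lam (-(1/2))) =
      PowerSeries.X * degExp lam x * degCos lam y)
    (hS1 : ∀ j, logS ^ j = (PowerSeries.C : ℂ →+* PowerSeries ℂ) (Nat.factorial j) * egf (fun k => S1 k j))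
    (n : ℕ) :
    (1/(n+1) : ℂ) * ∑ l ∈ Finset.range (n+2), ((n+1).choose l : ℂ) *
        (dff lam (1/2) (n+1-l) - dff lam (-(1/2)) (n+1-l)) * Bc l =
      ∑ k ∈ Finset.range (n+1), ∑ m ∈ Finset.range (k/2+1),
        (n.choose k : ℂ) * dff lam x (n-k) * (-1)^m * (lam:ℂ)^(k-2*m) * (y:ℂ)^(2*m) *
          S1 k (2*m) := by
  obtain rfl := eq_stirling1_of_logS_pow hS1
  simp only [degExp] at hBc
  rw [mul_assoc, mul_comm (egf _) (degCos _ _), degCos_eq_egf, egf_mul, X_mul_egf, egf_sub,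
    egf_mul] at hBc
  have hcoeff := congrFun (egf_injective hBc) (n + 1)
  simp only [Pi.sub_apply, Nat.add_sub_cancel] at hcoeff
  have hn : (n : ℂ) + 1 ≠ 0 := Nat.cast_add_one_ne_zero n
  calc (1 / (n + 1) : ℂ) * ∑ l ∈ range (n + 2), ((n + 1).choose l : ℂ) *
        (dff lam (1 / 2) (n + 1 - l) - dff lam (-(1 / 2)) (n + 1 - l)) * Bc l
      = 1 / (n + 1) * ∑ l ∈ range (n + 2), ((n + 1).choose l : ℂ) * Bc l *
        (dff lam (1 / 2) (n + 1 - l) - dff lam (-(1 / 2)) (n + 1 - l)) := by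
        simp only [mul_right_comm _ (Bc _)]
    _ = _ := by
        rw [hcoeff]
        push_cast
        field_simp
        simp only [sum_mul, mul_sum]
        exact sum_congr rfl fun k _ => sum_congr rfl fun m _ => by ring
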